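/- Let A be an alphabet and L ⊆ A* a language, with reversed language L^rev = { reverse(w) | w ∈ L }. Let L_Set^op : O_A → Set^op be the (Set^op, 2, 1)-language with L_Set^op(left) = 2, L_Set^op(right) = 1 and L_Set^op(▷w◁) : 2 → 1 in Set^op given by the function 1 → 2 in Set picking out the truth value of 'w ∈ L'; let L^rev_Set : O_A → Set be the (Set, 1, 2)-language with L^rev_Set(left) = 1, L^rev_Set(right) = 2 and L^rev_Set(▷w◁)(0) the truth value of 'w ∈ L^rev'. Then the category Auto(L_Set^op) of Set^op-automata accepting L_Set^op is isomorphic to the opposite of the category Auto(L^rev_Set) of Set-automata accepting L^rev_Set. -/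

import Mathlib

open CategoryTheory CategoryTheory.Limits

universe v u

/-! ### The input category `I_A` of word automata -/

inductive WObj (A : Type) : Type where
  | left | center | right

inductive WEdge {A : Type} : WObj A → WObj A → Type where
  | tri : WEdge WObj.left WObj.center
  | letter (a : A) : WEdge WObj.center WObj.center
  | tril : WEdge WObj.center WObj.right

instance (A : Type) : Quiver (WObj A) := ⟨WEdge⟩

/-- `I_A`: the free category on the graph `left -▷→ center -a→ center -◁→ right`. -/
def IA (A : Type) : Type := Paths (WObj A)

instance (A : Type) : Category (IA A) :=
  inferInstanceAs (Category (Paths (WObj A)))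

def IA.l (A : Type) : IA A := WObj.left
def IA.c (A : Type) : IA A := WObj.center
def IA.r (A : Type) : IA A := WObj.right

/-- The generating morphism `▷ : left ⟶ center`. -/
def IA.tri (A : Type) : IA.l A ⟶ IA.c A := Quiver.Hom.toPath WEdge.tri
/-- The generating morphism `a : center ⟶ center` for a letter `a`. -/
def IA.letter {A : Type} (a : A) : IA.c A ⟶ IA.c A := Quiver.Hom.toPath (WEdge.letter a)
/-- The generating morphism `◁ : center ⟶ right`. -/
def IA.tril (A : Type) : IA.c A ⟶ IA.r A := Quiver.Hom.toPath WEdge.tril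

/-- The word spelled by a path in the graph (the sequence of `letter` edges used). -/
def toWord {A : Type} : ∀ {X Y : WObj A}, Quiver.Path X Y → List A
  | _, _, Quiver.Path.nil => []
  | _, _, Quiver.Path.cons p e =>
      toWord p ++ (match e with
        | WEdge.letter a => [a]
        | _ => [])

/-- The path `center → center` spelling a word `w`. -/
def pathCC {A : Type} : List A → ((IA.c A) ⟶ (IA.c A))
  | [] => Quiver.Path.nil
  | a :: w => (Quiver.Hom.toPath (WEdge.letter a)).comp (pathCC w)

/-- The path `▷ w ◁ : left ⟶ right` spelling a word `w`. -/
def pathLR {A : Type} (w : List A) : (IA.l A) ⟶ (IA.r A) :=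
  IA.tri A ≫ pathCC w ≫ IA.tril A

theorem path_from_right {A : Type} : ∀ {Z : WObj A},
    Quiver.Path (WObj.right : WObj A) Z → Z = WObj.right
  | _, Quiver.Path.nil => rfl
  | _, Quiver.Path.cons p e => by
      have h := path_from_right p
      subst h
      exact nomatch e

theorem path_ll_nil {A : Type} (p : Quiver.Path (WObj.left : WObj A) WObj.left) :
    p = Quiver.Path.nil := by
  cases p with
  | nil => rfl
  | cons q e => exact nomatch e

theorem path_rr_nil {A : Type} (p : Quiver.Path (WObj.right : WObj A) WObj.right) :
    p = Quiver.Path.nil := by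
  cases p with
  | nil => rfl
  | cons q e =>
      have h := path_from_right q
      subst h
      exact nomatch e

theorem path_rl_false {A : Type} (p : Quiver.Path (WObj.right : WObj A) WObj.left) :
    False := by
  have := path_from_right p
  exact nomatch this

/-- `O_A`: the full subcategory of `I_A` on the objects `left` and `right`. -/
def OA (A : Type) : Type := ObjectProperty.FullSubcategory (fun X : IA A => X ≠ IA.c A)

instance (A : Type) : Category (OA A) :=
  inferInstanceAs (Category (ObjectProperty.FullSubcategory (fun X : IA A => X ≠ IA.c A)))

/-- The inclusion functor `ι : O_A ⥤ I_A`. -/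
def OA.inc (A : Type) : OA A ⥤ IA A := ObjectProperty.ι _

def OA.l (A : Type) : OA A := ⟨IA.l A, fun h => by cases h⟩
def OA.r (A : Type) : OA A := ⟨IA.r A, fun h => by cases h⟩

/-- The morphism `▷ w ◁ : left ⟶ right` of `O_A`. -/
def OA.word {A : Type} (w : List A) : OA.l A ⟶ OA.r A := InducedCategory.homMk (pathLR w)

/-- The language `O_A ⥤ C` determined by two objects `LI`, `LO` of `C` and a function
assigning to every word `w ∈ A*` a morphism `LI ⟶ LO` (the value at `▷w◁`). -/
def mkLang {A : Type} {C : Type u} [Category.{v} C] (LI LO : C)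
    (f : List A → (LI ⟶ LO)) : OA A ⥤ C where
  obj X :=
    match X with
    | ⟨WObj.left, _⟩ => LI
    | ⟨WObj.right, _⟩ => LO
    | ⟨WObj.center, h⟩ => absurd rfl h
  map {X Y} p :=
    match X, Y, p with
    | ⟨WObj.left, _⟩, ⟨WObj.left, _⟩, _ => 𝟙 LI
    | ⟨WObj.left, _⟩, ⟨WObj.right, _⟩, p => f (toWord p.hom)
    | ⟨WObj.right, _⟩, ⟨WObj.right, _⟩, _ => 𝟙 LO
    | ⟨WObj.right, _⟩, ⟨WObj.left, _⟩, p => (path_rl_false p.hom).elim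
    | ⟨WObj.center, h⟩, _, _ => absurd rfl h
    | _, ⟨WObj.center, h⟩, _ => absurd rfl h
  map_id X := by
    rcases X with ⟨(_|_|_), hX⟩
    · rfl
    · exact absurd rfl hX
    · rfl
  map_comp {X Y Z} p q := by
    rcases X with ⟨(_|_|_), hX⟩ <;> rcases Y with ⟨(_|_|_), hY⟩ <;>
      rcases Z with ⟨(_|_|_), hZ⟩ <;> rcases p with ⟨p⟩ <;> rcases q with ⟨q⟩ <;>
      first
        | exact absurd rfl hX
        | exact absurd rfl hY
        | exact absurd rfl hZ
        | exact (path_rl_false p).elim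
        | exact (path_rl_false q).elim
        | exact (Category.id_comp _).symm
        | (have hp := path_ll_nil p
           subst hp
           show f (toWord (Quiver.Path.comp Quiver.Path.nil q)) = 𝟙 LI ≫ f (toWord q)
           erw [Quiver.Path.nil_comp, Category.id_comp])
        | (have hq := path_rr_nil q
           subst hq
           show f (toWord (Quiver.Path.comp p Quiver.Path.nil)) = f (toWord p) ≫ 𝟙 LO
           erw [Quiver.Path.comp_nil, Category.comp_id])

/-- A `C`-automaton `M` accepts the `C`-language `L` when `ι ⋙ M = L`. -/
def Accepts {A : Type} {C : Type u} [Category.{v} C] (M : IA A ⥤ C) (L : OA A ⥤ C) : Prop :=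
  OA.inc A ⋙ M = L

/-- The category `Auto(L)` of `C`-automata accepting the language `L`; morphisms are
natural transformations whose whiskering along `ι` is the identity of `L`. -/
def Auto (A : Type) {C : Type u} [Category.{v} C] (L : OA A ⥤ C) : Type _ :=
  { M : IA A ⥤ C // Accepts M L }

instance (A : Type) {C : Type u} [Category.{v} C] (L : OA A ⥤ C) :
    Category (Auto A L) where
  Hom M N := { α : M.1 ⟶ N.1 //
    CategoryTheory.Functor.whiskerLeft (OA.inc A) α = eqToHom (M.2.trans N.2.symm) }
  id M := ⟨𝟙 M.1, by simp⟩
  comp {M N P} f g := ⟨f.1 ≫ g.1, by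
    rw [CategoryTheory.Functor.whiskerLeft_comp, f.2, g.2, eqToHom_trans]⟩
  id_comp f := Subtype.ext (Category.id_comp _)
  comp_id f := Subtype.ext (Category.comp_id _)
  assoc f g h := Subtype.ext (Category.assoc _ _ _)

/-- The functor `St : Auto(L) ⥤ C` evaluating an automaton at the object `center`. -/
def St (A : Type) {C : Type u} [Category.{v} C] (L : OA A ⥤ C) : Auto A L ⥤ C where
  obj M := M.1.obj (IA.c A)
  map f := f.1.app (IA.c A)
  map_id _ := rfl
  map_comp _ _ := rfl

/-- The underlying natural transformation of a morphism in `Auto(L)`. -/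
def Auto.nat {A : Type} {C : Type u} [Category.{v} C] {L : OA A ⥤ C} {M N : Auto A L}
    (α : M ⟶ N) : M.1 ⟶ N.1 :=
  (show { β : M.1 ⟶ N.1 //
      CategoryTheory.Functor.whiskerLeft (OA.inc A) β = eqToHom (M.2.trans N.2.symm) } from α).1

/-- Constructor for objects of `Auto(L)`. -/
def Auto.mk {A : Type} {C : Type u} [Category.{v} C] {L : OA A ⥤ C}
    (M : IA A ⥤ C) (h : Accepts M L) : Auto A L := ⟨M, h⟩

variable (A : Type)

/-- The `(Set^op, 2, 1)`-language associated with a language `L ⊆ A*` (represented by its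
Boolean membership function): it sends `▷w◁ : 2 ⟶ 1` (in `Set^op`) to the function
`1 → 2` picking out the truth value of `w ∈ L`. -/
def LSetop (L : List A → Bool) : OA A ⥤ (Type)ᵒᵖ :=
  mkLang (Opposite.op Bool) (Opposite.op PUnit)
    (fun w => Quiver.Hom.op (TypeCat.ofHom (fun _ : PUnit => L w)))

/-- The `(Set, 1, 2)`-language of the reversed language `L^rev`. -/
def LrevSet (L : List A → Bool) : OA A ⥤ Type :=
  mkLang PUnit Bool (fun w => TypeCat.ofHom (fun _ : PUnit => L w.reverse))


/-! ### Reversal machinery -/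

namespace AutoRev

variable {A : Type}

def rev : WObj A → WObj A
  | WObj.left => WObj.right
  | WObj.center => WObj.center
  | WObj.right => WObj.left

theorem rev_rev (X : WObj A) : rev (rev X) = X := by cases X <;> rfl

def revEdge : ∀ {X Y : WObj A}, WEdge X Y → WEdge (rev Y) (rev X)
  | _, _, WEdge.tri => WEdge.tril
  | _, _, WEdge.letter a => WEdge.letter a
  | _, _, WEdge.tril => WEdge.tri

def eTo {X Y : WObj A} (e : WEdge X Y) : Quiver.Path X Y := Quiver.Path.nil.cons e

def revPath {X : WObj A} : ∀ {Y : WObj A}, Quiver.Path X Y → Quiver.Path (rev Y) (rev X)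
  | _, Quiver.Path.nil => Quiver.Path.nil
  | _, Quiver.Path.cons p e => (eTo (revEdge e)).comp (revPath p)

/-- A path viewed as a morphism of `IA A`. -/
def toHom {X Y : WObj A} (p : Quiver.Path X Y) : (show IA A from X) ⟶ (show IA A from Y) := p

theorem toHom_comp {X Y Z : WObj A} (p : Quiver.Path X Y) (q : Quiver.Path Y Z) :
    toHom (p.comp q) = toHom p ≫ toHom q := rfl

theorem toHom_nil {X : WObj A} :
    toHom (Quiver.Path.nil : Quiver.Path X X) = 𝟙 (show IA A from X) := rfl

theorem revPath_comp {X Y Z : WObj A} (p : Quiver.Path X Y) (q : Quiver.Path Y Z) :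
    revPath (p.comp q) = (revPath q).comp (revPath p) := by
  induction q with
  | nil => simp [revPath, Quiver.Path.comp_nil, Quiver.Path.nil_comp]
  | cons q e ih =>
      show revPath ((p.comp q).cons e) = _
      simp [revPath, ih, Quiver.Path.comp_assoc]

def Rev (A : Type) : IA A ⥤ (IA A)ᵒᵖ where
  obj X := Opposite.op (rev X)
  map p := (toHom (revPath p)).op
  map_id X := rfl
  map_comp p q := congrArg Quiver.Hom.op
    (congrArg toHom (revPath_comp p q) :
      toHom (revPath (p.comp q)) = toHom ((revPath q).comp (revPath p)))

theorem rev_rev_IA (X : WObj A) :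
    @Eq (IA A) (rev (rev X)) X := rev_rev X

theorem conj_comp_aux {C : Type u} [Category.{v} C] {a b c d e f : C} (h1 : a = b) (p : b ⟶ c)
    (h2 : c = d) (h3 : d = c) (q : c ⟶ e) (h4 : e = f) (h4' : e = f) :
    (eqToHom h1 ≫ p ≫ eqToHom h2) ≫ eqToHom h3 ≫ q ≫ eqToHom h4 =
      eqToHom h1 ≫ (p ≫ q) ≫ eqToHom h4' := by
  subst h1 h2 h4; simp

theorem revPath_revPath {X Y : WObj A} (p : Quiver.Path X Y) :
    toHom (revPath (revPath p)) =
      eqToHom (rev_rev_IA X) ≫ toHom p ≫ eqToHom (rev_rev_IA Y).symm := by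
  induction p with
  | nil =>
      rw [show revPath (revPath (Quiver.Path.nil (a := X))) = Quiver.Path.nil from rfl,
        toHom_nil, toHom_nil]
      erw [Category.id_comp, eqToHom_trans, eqToHom_refl]
  | cons p e ih =>
      rename_i Z W
      rw [show revPath (Quiver.Path.cons p e) = (eTo (revEdge e)).comp (revPath p) from rfl,
        revPath_comp, toHom_comp, ih]
      have he : toHom (revPath (eTo (revEdge e))) =
          eqToHom (rev_rev_IA Z) ≫ toHom (eTo e) ≫ eqToHom (rev_rev_IA W).symm := by
        change WEdge Z W at e
        cases e <;> rfl
      have hcons : toHom (Quiver.Path.cons p e) = toHom p ≫ toHom (eTo e) := rfl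
      rw [he, hcons]
      exact conj_comp_aux _ _ _ _ _ _ _

def wordOf : ∀ {X Y : WObj A}, WEdge X Y → List A
  | _, _, WEdge.letter a => [a]
  | _, _, WEdge.tri => []
  | _, _, WEdge.tril => []

theorem toWord_cons {X Y Z : WObj A} (p : Quiver.Path X Y) (e : WEdge Y Z) :
    toWord (p.cons e) = toWord p ++ wordOf e := by
  cases e <;> simp [toWord, wordOf]

theorem toWord_nil {X : WObj A} : toWord (Quiver.Path.nil : Quiver.Path X X) = [] := by
  simp [toWord]

theorem toWord_eTo {X Y : WObj A} (e : WEdge X Y) : toWord (eTo e) = wordOf e := by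
  rw [eTo, toWord_cons, toWord_nil]; simp

theorem toWord_comp {X Y Z : WObj A} (p : Quiver.Path X Y) (q : Quiver.Path Y Z) :
    toWord (p.comp q) = toWord p ++ toWord q := by
  induction q with
  | nil => simp [toWord_nil]
  | cons q e ih =>
      show toWord ((p.comp q).cons e) = _
      rw [toWord_cons, ih, toWord_cons, List.append_assoc]

theorem wordOf_revEdge {X Y : WObj A} (e : WEdge X Y) :
    wordOf (revEdge e) = wordOf e := by cases e <;> rfl

theorem toWord_revPath {X Y : WObj A} (p : Quiver.Path X Y) :
    toWord (revPath p) = (toWord p).reverse := by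
  induction p with
  | nil => simp [revPath, toWord_nil]
  | cons p e ih =>
      rw [show revPath (Quiver.Path.cons p e) = (eTo (revEdge e)).comp (revPath p) from rfl,
        toWord_comp, ih, toWord_eTo, toWord_cons, wordOf_revEdge, List.reverse_append]
      change WEdge _ _ at e
      cases e <;> simp [wordOf]


theorem id_conj {C : Type u} [Category.{v} C] {X Y : C} (h : X = Y) (h' : Y = X) :
    𝟙 X = eqToHom h ≫ 𝟙 Y ≫ eqToHom h' := by subst h; simp

theorem unop_aux {C : Type u} [Category.{v} C] {X Y W : C} {Z : Cᵒᵖ} (g : X ⟶ Y)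
    (h : Opposite.op X = Z) (h' : Y = W) (a : Z.unop = X) (b : Y = W) :
    (g.op ≫ eqToHom h).unop ≫ eqToHom h' = eqToHom a ≫ g ≫ eqToHom b := by
  subst h h'; simp

theorem op_aux {C : Type u} [Category.{v} C] {X Y Z : C} {W : Cᵒᵖ} (g : X ⟶ Y)
    (h : Y = Z) (h' : Opposite.op X = W) (a : Opposite.op Z = Opposite.op Y)
    (b : Opposite.op X = W) :
    (g ≫ eqToHom h).op ≫ eqToHom h' = eqToHom a ≫ g.op ≫ eqToHom b := by
  subst h h'; simp

/-! ### The functors on automata -/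

def PhiF {A : Type} (M : IA A ⥤ (Type)ᵒᵖ) : IA A ⥤ Type := Rev A ⋙ M.leftOp

def PsiF {A : Type} (N : IA A ⥤ Type) : IA A ⥤ (Type)ᵒᵖ := Rev A ⋙ N.op

theorem phiF_accepts {A : Type} (L : List A → Bool) {M : IA A ⥤ (Type)ᵒᵖ}
    (hM : Accepts M (LSetop A L)) : Accepts (PhiF M) (LrevSet A L) := by
  have hobj : ∀ X : OA A, M.obj ((OA.inc A).obj X) = (LSetop A L).obj X :=
    fun X => Functor.congr_obj hM X
  have hmap : ∀ {X Y : OA A} (p : X ⟶ Y), M.map ((OA.inc A).map p) =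
      eqToHom (hobj X) ≫ (LSetop A L).map p ≫ eqToHom (hobj Y).symm :=
    fun p => Functor.congr_hom hM p
  show OA.inc A ⋙ PhiF M = LrevSet A L
  apply CategoryTheory.Functor.ext
  case h_obj =>
    rintro ⟨(_|_|_), h⟩
    · exact congrArg Opposite.unop (hobj (OA.r A))
    · exact absurd rfl h
    · exact congrArg Opposite.unop (hobj (OA.l A))
  case h_map =>
    rintro ⟨(_|_|_), hX⟩ ⟨(_|_|_), hY⟩ ⟨f⟩
    all_goals first
      | exact absurd rfl hX
      | exact absurd rfl hY
      | skip
    · -- left → left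
      obtain rfl := path_ll_nil f
      have e1 : (OA.inc A ⋙ PhiF M).map
          (X := ⟨WObj.left, hX⟩) (Y := ⟨WObj.left, hY⟩) ⟨Quiver.Path.nil⟩ =
          (M.map (𝟙 (IA.r A))).unop := rfl
      have e2 : (LrevSet A L).map
          (X := ⟨WObj.left, hX⟩) (Y := ⟨WObj.left, hY⟩) ⟨Quiver.Path.nil⟩ = 𝟙 PUnit := rfl
      rw [e1, e2, M.map_id]
      exact id_conj _ _
    · -- left → right
      have h1 := hmap (X := OA.l A) (Y := OA.r A) ⟨revPath f⟩
      have e1 : (OA.inc A ⋙ PhiF M).map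
          (X := ⟨WObj.left, hX⟩) (Y := ⟨WObj.right, hY⟩) ⟨f⟩ =
          (M.map ((OA.inc A).map (X := OA.l A) (Y := OA.r A) ⟨revPath f⟩)).unop := rfl
      have h2 : (LSetop A L).map (X := OA.l A) (Y := OA.r A) ⟨revPath f⟩ =
          Quiver.Hom.op (TypeCat.ofHom (fun _ : PUnit => L (toWord (revPath f)))) := rfl
      have h3 : (LrevSet A L).map
          (X := ⟨WObj.left, hX⟩) (Y := ⟨WObj.right, hY⟩) ⟨f⟩ =
          TypeCat.ofHom (fun _ : PUnit => L ((toWord f).reverse)) := rfl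
      erw [e1, h1, h2, toWord_revPath, h3]
      simp [eqToHom_unop]
      exact unop_aux _ _ _ _ _
    · -- right → left
      exact (path_rl_false f).elim
    · -- right → right
      obtain rfl := path_rr_nil f
      have e1 : (OA.inc A ⋙ PhiF M).map
          (X := ⟨WObj.right, hX⟩) (Y := ⟨WObj.right, hY⟩) ⟨Quiver.Path.nil⟩ =
          (M.map (𝟙 (IA.l A))).unop := rfl
      have e2 : (LrevSet A L).map
          (X := ⟨WObj.right, hX⟩) (Y := ⟨WObj.right, hY⟩) ⟨Quiver.Path.nil⟩ = 𝟙 Bool := rfl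
      rw [e1, e2, M.map_id]
      exact id_conj _ _


theorem psiF_accepts {A : Type} (L : List A → Bool) {N : IA A ⥤ Type}
    (hN : Accepts N (LrevSet A L)) : Accepts (PsiF N) (LSetop A L) := by
  have hobj : ∀ X : OA A, N.obj ((OA.inc A).obj X) = (LrevSet A L).obj X :=
    fun X => Functor.congr_obj hN X
  have hmap : ∀ {X Y : OA A} (p : X ⟶ Y), N.map ((OA.inc A).map p) =
      eqToHom (hobj X) ≫ (LrevSet A L).map p ≫ eqToHom (hobj Y).symm :=
    fun p => Functor.congr_hom hN p
  show OA.inc A ⋙ PsiF N = LSetop A L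
  apply CategoryTheory.Functor.ext
  case h_obj =>
    rintro ⟨(_|_|_), h⟩
    · exact congrArg Opposite.op (hobj (OA.r A))
    · exact absurd rfl h
    · exact congrArg Opposite.op (hobj (OA.l A))
  case h_map =>
    rintro ⟨(_|_|_), hX⟩ ⟨(_|_|_), hY⟩ ⟨f⟩
    all_goals first
      | exact absurd rfl hX
      | exact absurd rfl hY
      | skip
    · -- left → left
      obtain rfl := path_ll_nil f
      have e1 : (OA.inc A ⋙ PsiF N).map
          (X := ⟨WObj.left, hX⟩) (Y := ⟨WObj.left, hY⟩) ⟨Quiver.Path.nil⟩ =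
          (N.map (𝟙 (IA.r A))).op := rfl
      have e2 : (LSetop A L).map
          (X := ⟨WObj.left, hX⟩) (Y := ⟨WObj.left, hY⟩) ⟨Quiver.Path.nil⟩ =
          𝟙 (Opposite.op Bool) := rfl
      rw [e1, e2, N.map_id]
      exact id_conj (X := Opposite.op (N.obj (IA.r A))) _ _
    · -- left → right
      have h1 := hmap (X := OA.l A) (Y := OA.r A) ⟨revPath f⟩
      have e1 : (OA.inc A ⋙ PsiF N).map
          (X := ⟨WObj.left, hX⟩) (Y := ⟨WObj.right, hY⟩) ⟨f⟩ =
          (N.map ((OA.inc A).map (X := OA.l A) (Y := OA.r A) ⟨revPath f⟩)).op := rfl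
      have h2 : (LrevSet A L).map (X := OA.l A) (Y := OA.r A) ⟨revPath f⟩ =
          TypeCat.ofHom (fun _ : PUnit => L ((toWord (revPath f)).reverse)) := rfl
      have h3 : (LSetop A L).map
          (X := ⟨WObj.left, hX⟩) (Y := ⟨WObj.right, hY⟩) ⟨f⟩ =
          Quiver.Hom.op (TypeCat.ofHom (fun _ : PUnit => L (toWord f))) := rfl
      erw [e1, h1, h2, toWord_revPath, List.reverse_reverse, h3]
      simp [eqToHom_op]
      exact op_aux _ _ _ _ _
    · -- right → left
      exact (path_rl_false f).elim
    · -- right → right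
      obtain rfl := path_rr_nil f
      have e1 : (OA.inc A ⋙ PsiF N).map
          (X := ⟨WObj.right, hX⟩) (Y := ⟨WObj.right, hY⟩) ⟨Quiver.Path.nil⟩ =
          (N.map (𝟙 (IA.l A))).op := rfl
      have e2 : (LSetop A L).map
          (X := ⟨WObj.right, hX⟩) (Y := ⟨WObj.right, hY⟩) ⟨Quiver.Path.nil⟩ =
          𝟙 (Opposite.op PUnit) := rfl
      rw [e1, e2, N.map_id]
      exact id_conj (X := Opposite.op (N.obj (IA.l A))) _ _

theorem auto_eqToHom_app {A : Type} {C : Type u} [Category.{v} C] {L : OA A ⥤ C}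
    {M N : Auto A L} (h : M = N) (X : IA A) :
    (eqToHom h).1.app X = eqToHom (congrArg (fun P : Auto A L => P.1.obj X) h) := by
  subst h; rfl

theorem auto_op_eqToHom_app {A : Type} {C : Type u} [Category.{v} C] {L : OA A ⥤ C}
    {M N : (Auto A L)ᵒᵖ} (h : M = N) (X : IA A) :
    (eqToHom h).unop.1.app X =
      eqToHom (congrArg (fun P : (Auto A L)ᵒᵖ => P.unop.1.obj X) h).symm := by
  subst h; rfl

theorem phi_cond {A : Type} (L : List A → Bool) {M N : Auto A (LSetop A L)} (f : M ⟶ N) :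
    CategoryTheory.Functor.whiskerLeft (OA.inc A)
        (CategoryTheory.Functor.whiskerLeft (Rev A) (NatTrans.leftOp f.1)) =
      eqToHom ((phiF_accepts L N.2).trans (phiF_accepts L M.2).symm) := by
  apply NatTrans.ext
  funext X
  rcases X with ⟨(_|_|_), h⟩
  · have h1 := NatTrans.congr_app f.2 (OA.r A)
    show ((CategoryTheory.Functor.whiskerLeft (OA.inc A) f.1).app (OA.r A)).unop = _
    erw [h1, eqToHom_app, eqToHom_unop, eqToHom_app]
    rfl
  · exact absurd rfl h
  · have h1 := NatTrans.congr_app f.2 (OA.l A)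
    show ((CategoryTheory.Functor.whiskerLeft (OA.inc A) f.1).app (OA.l A)).unop = _
    erw [h1, eqToHom_app, eqToHom_unop, eqToHom_app]
    rfl

theorem psi_cond {A : Type} (L : List A → Bool) {B C : Auto A (LrevSet A L)} (g : C ⟶ B) :
    CategoryTheory.Functor.whiskerLeft (OA.inc A)
        (CategoryTheory.Functor.whiskerLeft (Rev A) (NatTrans.op g.1)) =
      eqToHom ((psiF_accepts L B.2).trans (psiF_accepts L C.2).symm) := by
  apply NatTrans.ext
  funext X
  rcases X with ⟨(_|_|_), h⟩
  · have h1 := NatTrans.congr_app g.2 (OA.r A)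
    show ((CategoryTheory.Functor.whiskerLeft (OA.inc A) g.1).app (OA.r A)).op = _
    erw [h1, eqToHom_app, eqToHom_op, eqToHom_app]
    rfl
  · exact absurd rfl h
  · have h1 := NatTrans.congr_app g.2 (OA.l A)
    show ((CategoryTheory.Functor.whiskerLeft (OA.inc A) g.1).app (OA.l A)).op = _
    erw [h1, eqToHom_app, eqToHom_op, eqToHom_app]
    rfl

def Phi {A : Type} (L : List A → Bool) :
    Auto A (LSetop A L) ⥤ (Auto A (LrevSet A L))ᵒᵖ where
  obj M := Opposite.op ⟨PhiF M.1, phiF_accepts L M.2⟩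
  map {M N} f := Quiver.Hom.op
    (show Auto.mk (PhiF N.1) (phiF_accepts L N.2) ⟶ Auto.mk (PhiF M.1) (phiF_accepts L M.2) from
      ⟨CategoryTheory.Functor.whiskerLeft (Rev A) (NatTrans.leftOp f.1), phi_cond L f⟩)
  map_id M := Quiver.Hom.unop_inj (Subtype.ext (by apply NatTrans.ext; funext X; rfl))
  map_comp f g := Quiver.Hom.unop_inj (Subtype.ext (by apply NatTrans.ext; funext X; rfl))

def Psi {A : Type} (L : List A → Bool) :
    (Auto A (LrevSet A L))ᵒᵖ ⥤ Auto A (LSetop A L) where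
  obj N := ⟨PsiF N.unop.1, psiF_accepts L N.unop.2⟩
  map {B C} g := ⟨CategoryTheory.Functor.whiskerLeft (Rev A) (NatTrans.op g.unop.1), psi_cond L g.unop⟩
  map_id N := Subtype.ext (by apply NatTrans.ext; funext X; rfl)
  map_comp f g := Subtype.ext (by apply NatTrans.ext; funext X; rfl)

theorem psiF_phiF {A : Type} (M : IA A ⥤ (Type)ᵒᵖ) : PsiF (PhiF M) = M := by
  apply CategoryTheory.Functor.ext
  case h_obj =>
    intro X
    exact congrArg M.obj (rev_rev_IA X)
  case h_map =>
    intro X Y p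
    have e1 : (PsiF (PhiF M)).map p = M.map (toHom (revPath (revPath p))) := rfl
    erw [e1, revPath_revPath, M.map_comp, M.map_comp, eqToHom_map, eqToHom_map]
    rfl

theorem phiF_psiF {A : Type} (N : IA A ⥤ Type) : PhiF (PsiF N) = N := by
  apply CategoryTheory.Functor.ext
  case h_obj =>
    intro X
    exact congrArg N.obj (rev_rev_IA X)
  case h_map =>
    intro X Y p
    have e1 : (PhiF (PsiF N)).map p = N.map (toHom (revPath (revPath p))) := rfl
    erw [e1, revPath_revPath, N.map_comp, N.map_comp, eqToHom_map, eqToHom_map]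
    rfl

end AutoRev

/-- The category of `Set^op`-automata accepting `L_Set^op` is isomorphic to the opposite of
the category of `Set`-automata accepting the reversed language `L^rev_Set`. -/
theorem autoSetop_iso_op_autoSetrev (L : List A → Bool) :
    ∃ (Φ : Auto A (LSetop A L) ⥤ (Auto A (LrevSet A L))ᵒᵖ)
      (Ψ : (Auto A (LrevSet A L))ᵒᵖ ⥤ Auto A (LSetop A L)),
      Φ ⋙ Ψ = 𝟭 (Auto A (LSetop A L)) ∧ Ψ ⋙ Φ = 𝟭 (Auto A (LrevSet A L))ᵒᵖ := by
  refine ⟨AutoRev.Phi L, AutoRev.Psi L, ?_, ?_⟩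
  · have hobj : ∀ M : Auto A (LSetop A L), (AutoRev.Phi L ⋙ AutoRev.Psi L).obj M = M :=
      fun M => Subtype.ext (AutoRev.psiF_phiF M.1)
    refine CategoryTheory.Functor.ext hobj ?_
    intro M N f
    apply Subtype.ext
    apply NatTrans.ext
    funext X
    show f.1.app (AutoRev.rev (AutoRev.rev X)) =
      (eqToHom (hobj M)).1.app X ≫ f.1.app X ≫ (eqToHom (hobj N).symm).1.app X
    rw [AutoRev.auto_eqToHom_app, AutoRev.auto_eqToHom_app]
    rcases X with (_|_|_) <;> rfl
  · have hobj : ∀ X : (Auto A (LrevSet A L))ᵒᵖ, (AutoRev.Psi L ⋙ AutoRev.Phi L).obj X = X :=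
      fun X => congrArg Opposite.op (Subtype.ext (AutoRev.phiF_psiF X.unop.1))
    refine CategoryTheory.Functor.ext hobj ?_
    intro B C f
    apply Quiver.Hom.unop_inj
    apply Subtype.ext
    apply NatTrans.ext
    funext X
    show f.unop.1.app (AutoRev.rev (AutoRev.rev X)) =
      (eqToHom (hobj C).symm).unop.1.app X ≫ f.unop.1.app X ≫ (eqToHom (hobj B)).unop.1.app X
    rw [AutoRev.auto_op_eqToHom_app, AutoRev.auto_op_eqToHom_app]
    rcases X with (_|_|_) <;> rfl
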